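/- arXiv:1902.03522 — 2 statements merged into one kernel-verified Lean document; each statement's English description precedes it below -/
import Mathlib

section
/- Let y ∈ ℝ^n, w ∈ (ℝ>0)^n, c ∈ ℝ, and suppose λ* satisfies ∑_i w_i·[y_i - λ* w_i] = c. Then the point x with x_i = [y_i - λ* w_i] is the unique minimizer of ‖y - x‖_2^2 over the set {x ∈ ℝ^n : ‖x‖_∞ ≤ 1, ⟨w, x⟩ = c}. -/
/-- Truncation to the interval `[-1, 1]`. -/
noncomputable def trunc (z : ℝ) : ℝ := min 1 (max (-1) z)

lemma trunc_abs_le (u : ℝ) : |trunc u| ≤ 1 := by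
  unfold trunc
  rw [abs_le]
  constructor
  · exact le_min (by norm_num) (le_max_left _ _)
  · exact min_le_left _ _

lemma trunc_key (u z : ℝ) (hz : |z| ≤ 1) : 0 ≤ (u - trunc u) * (trunc u - z) := by
  rw [abs_le] at hz
  unfold trunc
  rcases le_total u (-1) with h | h
  · rw [max_eq_left h, min_eq_right (by linarith : (-1:ℝ) ≤ 1)]
    nlinarith
  · rw [max_eq_right h]
    rcases le_total 1 u with h2 | h2
    · rw [min_eq_left h2]; nlinarith
    · rw [min_eq_right h2]; nlinarith

theorem stmt7 (n : ℕ) (y : Fin n → ℝ) (w : Fin n → ℝ) (hw : ∀ i, 0 < w i)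
    (c : ℝ) (lam : ℝ) (hlam : ∑ i, w i * trunc (y i - lam * w i) = c) :
    (∀ i, |trunc (y i - lam * w i)| ≤ 1) ∧
    (∑ i, w i * trunc (y i - lam * w i) = c) ∧
    (∀ z : Fin n → ℝ, (∀ i, |z i| ≤ 1) → (∑ i, w i * z i = c) →
      (z ≠ fun i => trunc (y i - lam * w i)) →
      ∑ i, (y i - trunc (y i - lam * w i)) ^ 2 < ∑ i, (y i - z i) ^ 2) := by
  set x : Fin n → ℝ := fun i => trunc (y i - lam * w i) with hx
  refine ⟨fun i => trunc_abs_le _, hlam, ?_⟩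
  intro z hz hzc hne
  -- cross term nonneg
  have h1 : 0 ≤ ∑ i, (y i - lam * w i - x i) * (x i - z i) :=
    Finset.sum_nonneg fun i _ => trunc_key _ _ (hz i)
  have h2 : ∑ i, lam * w i * (x i - z i) = 0 := by
    have : ∑ i, lam * w i * (x i - z i)
        = lam * ((∑ i, w i * x i) - ∑ i, w i * z i) := by
      rw [← Finset.sum_sub_distrib, Finset.mul_sum]
      exact Finset.sum_congr rfl fun i _ => by ring
    rw [this, hlam, hzc, sub_self, mul_zero]
  have hcross : 0 ≤ ∑ i, (y i - x i) * (x i - z i) := by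
    have : ∑ i, (y i - x i) * (x i - z i)
        = (∑ i, (y i - lam * w i - x i) * (x i - z i))
          + ∑ i, lam * w i * (x i - z i) := by
      rw [← Finset.sum_add_distrib]
      exact Finset.sum_congr rfl fun i _ => by ring
    rw [this, h2, add_zero]; exact h1
  -- positivity of distance
  obtain ⟨j, hj⟩ := Function.ne_iff.mp hne
  have hpos : 0 < ∑ i, (x i - z i) ^ 2 := by
    apply Finset.sum_pos' (fun i _ => sq_nonneg _)
    exact ⟨j, Finset.mem_univ j, by have := sub_ne_zero_of_ne hj.symm; positivity⟩
  have hexp : ∑ i, (y i - z i) ^ 2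
      = ∑ i, (y i - x i) ^ 2 + 2 * ∑ i, (y i - x i) * (x i - z i)
        + ∑ i, (x i - z i) ^ 2 := by
    rw [Finset.mul_sum, ← Finset.sum_add_distrib, ← Finset.sum_add_distrib]
    exact Finset.sum_congr rfl fun i _ => by ring
  linarith
end

section
/- (Solution convexity) Fix y ∈ ℝ^n, weights w^1,…,w^d ∈ ℝ^n, and x ∈ [-1,1]^n. The set Λ = {λ ∈ ℝ^d : x_i = [y_i - ∑_j λ_j w^j_i] for all i} is convex. Concretely, if x_i = [y_i - ∑_j λ_j w^j_i] = [y_i - ∑_j λ'_j w^j_i] for all i, then for every α ∈ [0,1], x_i = [y_i - ∑_j (αλ_j + (1-α)λ'_j) w^j_i] for all i. -/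
lemma trunc_mono : Monotone trunc := fun a b hab => by
  unfold trunc; exact min_le_min le_rfl (max_le_max le_rfl hab)

lemma trunc_comb (c a b : ℝ) (ha : c = trunc a) (hb : c = trunc b)
    (α β : ℝ) (hα : 0 ≤ α) (hβ : 0 ≤ β) (hαβ : α + β = 1) :
    c = trunc (α * a + β * b) := by
  have hmin : min a b ≤ α * a + β * b := by
    calc min a b = α * min a b + β * min a b := by rw [← add_mul, hαβ, one_mul]
    _ ≤ α * a + β * b := by
      gcongr
      · exact min_le_left a b
      · exact min_le_right a b
  have hmax : α * a + β * b ≤ max a b := by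
    calc α * a + β * b ≤ α * max a b + β * max a b := by
          gcongr
          · exact le_max_left a b
          · exact le_max_right a b
    _ = max a b := by rw [← add_mul, hαβ, one_mul]
  have h1 : trunc (min a b) = c := by
    rcases min_cases a b with ⟨hm, _⟩ | ⟨hm, _⟩ <;> rw [hm]
    · exact ha.symm
    · exact hb.symm
  have h2 : trunc (max a b) = c := by
    rcases max_cases a b with ⟨hm, _⟩ | ⟨hm, _⟩ <;> rw [hm]
    · exact ha.symm
    · exact hb.symm
  have := trunc_mono hmin
  have := trunc_mono hmax
  linarith

theorem stmt14 (n d : ℕ) (y : Fin n → ℝ) (w : Fin d → Fin n → ℝ)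
    (x : Fin n → ℝ) (hx : ∀ i, x i ∈ Set.Icc (-1 : ℝ) 1)
    (lam lam' : Fin d → ℝ)
    (h : ∀ i, x i = trunc (y i - ∑ j, lam j * w j i))
    (h' : ∀ i, x i = trunc (y i - ∑ j, lam' j * w j i)) :
    Convex ℝ {l : Fin d → ℝ | ∀ i, x i = trunc (y i - ∑ j, l j * w j i)} ∧
    ∀ α : ℝ, α ∈ Set.Icc (0 : ℝ) 1 →
      ∀ i, x i = trunc (y i - ∑ j, (α * lam j + (1 - α) * lam' j) * w j i) := by
  constructor
  · intro l hl l' hl' α β hα hβ hαβ i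
    have key := trunc_comb (x i) (y i - ∑ j, l j * w j i) (y i - ∑ j, l' j * w j i)
      (hl i) (hl' i) α β hα hβ hαβ
    have : α * (y i - ∑ j, l j * w j i) + β * (y i - ∑ j, l' j * w j i)
        = y i - ∑ j, (α • l + β • l') j * w j i := by
      simp only [Pi.add_apply, Pi.smul_apply, smul_eq_mul]
      rw [Finset.sum_congr rfl (fun j _ => by ring :
        ∀ j ∈ Finset.univ, (α * l j + β * l' j) * w j i
          = α * (l j * w j i) + β * (l' j * w j i)),
        Finset.sum_add_distrib, ← Finset.mul_sum, ← Finset.mul_sum]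
      linear_combination y i * hαβ
    rwa [this] at key
  · intro α hα i
    have key := trunc_comb (x i) (y i - ∑ j, lam j * w j i) (y i - ∑ j, lam' j * w j i)
      (h i) (h' i) α (1 - α) hα.1 (by linarith [hα.2]) (by ring)
    have : α * (y i - ∑ j, lam j * w j i) + (1 - α) * (y i - ∑ j, lam' j * w j i)
        = y i - ∑ j, (α * lam j + (1 - α) * lam' j) * w j i := by
      rw [Finset.sum_congr rfl (fun j _ => by ring :
        ∀ j ∈ Finset.univ, (α * lam j + (1 - α) * lam' j) * w j i
          = α * (lam j * w j i) + (1 - α) * (lam' j * w j i)),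
        Finset.sum_add_distrib, ← Finset.mul_sum, ← Finset.mul_sum]
      ring
    rwa [this] at key
end
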